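/- If G is a simple graph with n ≥ 3 vertices and minimum degree δ(G) ≥ n/2, then G is Hamiltonian (Dirac's theorem). -/

import Mathlib

/-!
Take a longest path `a = v₀, …, v_k = b`. Maximality puts every neighbour of `a` and of `b` on the
path, and since `deg a + deg b ≥ n > k`, pigeonhole gives an edge `v_i v_{i+1}` of the path with
`a ~ v_{i+1}` and `b ~ v_i`. Then `a, v_{i+1}, …, b, v_i, …, a` is a cycle through all `k + 1`
vertices of the path. Minimum degree `≥ n / 2` makes any two non-adjacent vertices share a
neighbour, so `G` is connected; a vertex off the cycle would then be adjacent to it, and opening the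
cycle at that edge would give a path longer than `k`. Hence the cycle is Hamiltonian.
-/

namespace SimpleGraph

open Finset

variable {V : Type*} {G : SimpleGraph V}

lemma exists_adj_adj_of_card_lt_degree_add_degree [Fintype V] [DecidableRel G.Adj] {u v : V}
    (huv : u ≠ v) (hadj : ¬G.Adj u v) (h : Fintype.card V < G.degree u + G.degree v + 2) :
    ∃ w, G.Adj u w ∧ G.Adj v w := by
  classical
  by_contra! hw
  have hdisj : Disjoint (G.neighborFinset u) (G.neighborFinset v) :=
    Finset.disjoint_left.2 fun w hu hv => hw w (by simpa using hu) (by simpa using hv)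
  have hdisj' : Disjoint (G.neighborFinset u ∪ G.neighborFinset v) {u, v} := by
    simp [G.adj_comm v u, hadj]
  have := card_le_univ (G.neighborFinset u ∪ G.neighborFinset v ∪ {u, v})
  rw [card_union_of_disjoint hdisj', card_union_of_disjoint hdisj, card_pair huv, card_neighborFinset_eq_degree, card_neighborFinset_eq_degree] at this
  omega

lemma connected_of_card_le_two_mul_minDegree_add_one [Fintype V] [DecidableRel G.Adj]
    [Nonempty V] (h : Fintype.card V ≤ 2 * G.minDegree + 1) : G.Connected where
  preconnected u v := by
    by_cases huv : u = v
    · exact huv ▸ Reachable.refl u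
    by_cases hadj : G.Adj u v
    · exact hadj.reachable
    obtain ⟨w, huw, hvw⟩ := exists_adj_adj_of_card_lt_degree_add_degree huv hadj
      (by have := G.minDegree_le_degree u; have := G.minDegree_le_degree v; omega)
    exact huw.reachable.trans hvw.symm.reachable

variable {u v x y : V}

def Walk.IsLongestPath (p : G.Walk u v) : Prop :=
  p.IsPath ∧ ∀ ⦃a b : V⦄ (q : G.Walk a b), q.IsPath → q.length ≤ p.length

lemma exists_isLongestPath [Finite V] [Nonempty V] :
    ∃ (u v : V) (p : G.Walk u v), p.IsLongestPath := by
  classical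
  have := Fintype.ofFinite V
  have : Nonempty (Σ u v, G.Path u v) := ⟨⟨Classical.arbitrary V, _, Path.nil⟩⟩
  obtain ⟨⟨u, v, p⟩, hp⟩ := Finite.exists_max fun q : Σ u v, G.Path u v => q.2.2.1.length
  exact ⟨u, v, p, p.2, fun a b q hq => hp ⟨a, b, q, hq⟩⟩

namespace Walk

lemma card_toFinset_darts_le_length [DecidableEq V] (p : G.Walk u v) :
    #p.darts.toFinset ≤ p.length :=
  (List.toFinset_card_le _).trans (length_darts p).le

namespace IsLongestPath

variable {p : G.Walk u v}

protected lemma reverse (hp : p.IsLongestPath) : p.reverse.IsLongestPath :=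
  ⟨hp.1.reverse, by simpa using hp.2⟩

lemma mem_support_of_adj (hp : p.IsLongestPath) (h : G.Adj u x) : x ∈ p.support := by
  by_contra hx
  have := hp.2 _ (hp.1.cons hx (h := h.symm))
  simp at this

lemma exists_mem_darts_snd_eq (hp : p.IsLongestPath) (h : G.Adj u x) :
    ∃ d ∈ p.darts, d.snd = x := by
  have hx : x ∈ p.support.tail := by
    have := hp.mem_support_of_adj h
    rw [← cons_tail_support, List.mem_cons] at this
    exact this.resolve_left h.ne'
  simpa [← map_snd_darts] using hx

lemma exists_mem_darts_fst_eq (hp : p.IsLongestPath) (h : G.Adj v x) :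
    ∃ d ∈ p.darts, d.fst = x := by
  obtain ⟨d, hd, rfl⟩ := hp.reverse.exists_mem_darts_snd_eq h
  exact ⟨d.symm, by simpa using hd, rfl⟩

section Degree

variable [Fintype V] [DecidableRel G.Adj] [DecidableEq V]

lemma degree_start_le_card_filter (hp : p.IsLongestPath) :
    G.degree u ≤ #{d ∈ p.darts.toFinset | G.Adj u d.snd} := by
  rw [← card_neighborFinset_eq_degree]
  refine card_le_card_of_surjOn (·.snd) fun x hx => ?_
  rw [mem_coe, mem_neighborFinset] at hx
  obtain ⟨d, hd, rfl⟩ := hp.exists_mem_darts_snd_eq hx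
  exact ⟨d, by simpa using ⟨hd, hx⟩, rfl⟩

lemma degree_end_le_card_filter (hp : p.IsLongestPath) :
    G.degree v ≤ #{d ∈ p.darts.toFinset | G.Adj v d.fst} := by
  rw [← card_neighborFinset_eq_degree]
  refine card_le_card_of_surjOn (·.fst) fun x hx => ?_
  rw [mem_coe, mem_neighborFinset] at hx
  obtain ⟨d, hd, rfl⟩ := hp.exists_mem_darts_fst_eq hx
  exact ⟨d, by simpa using ⟨hd, hx⟩, rfl⟩

lemma degree_start_le_length (hp : p.IsLongestPath) : G.degree u ≤ p.length :=
  hp.degree_start_le_card_filter.trans ((card_filter_le _ _).trans p.card_toFinset_darts_le_length)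

lemma exists_mem_darts_adj_adj (hp : p.IsLongestPath) (h : p.length < G.degree u + G.degree v) :
    ∃ d ∈ p.darts, G.Adj u d.snd ∧ G.Adj v d.fst := by
  obtain ⟨d, hd⟩ := inter_nonempty_of_card_lt_card_add_card (filter_subset _ _)
    (filter_subset _ _) <| p.card_toFinset_darts_le_length.trans_lt <|
      h.trans_le (add_le_add hp.degree_start_le_card_filter hp.degree_end_le_card_filter)
  simp only [mem_inter, mem_filter, List.mem_toFinset] at hd
  exact ⟨d, hd.1.1, hd.1.2, hd.2.2⟩

end Degree

end IsLongestPath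

lemma IsPath.exists_isCycle_length_eq_add_one {p : G.Walk u v} (hp : p.IsPath)
    (hlen : 2 ≤ p.length) {d : G.Dart} (hd : d ∈ p.darts) (hu : G.Adj u d.snd)
    (hv : G.Adj v d.fst) : ∃ c : G.Walk u u, c.IsCycle ∧ c.length = p.length + 1 := by
  obtain ⟨p₁, p₂, rfl⟩ := (isSubwalk_toWalk_adj_iff_mem_darts p).2 hd
  -- now `p = p₁ ++ [d] ++ p₂`, and the cycle is `u → d.snd ⋯p₂⋯ v → d.fst ⋯p₁ reversed⋯ u`
  rw [Adj.toWalk, ← concat_eq_append, concat_append, isPath_def] at hp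
  rw [Adj.toWalk, ← concat_eq_append, concat_append] at hlen ⊢
  have hq : (p₂.append (cons hv p₁.reverse)).IsPath := by
    rw [isPath_def, support_append, support_cons, List.tail_cons, support_reverse]
    rw [support_append, support_cons, List.tail_cons] at hp
    exact (List.perm_append_comm.trans ((List.reverse_perm _).append_right _)).nodup_iff.2 hp
  refine ⟨cons hu _, isCycle_iff_isPath_tail_and_le_length.2 ⟨by simpa using hq, ?_⟩, ?_⟩ <;>
  · simp only [length_cons, length_append, length_reverse] at hlen ⊢
    omega

lemma IsCycle.exists_isPath_length_eq [DecidableEq V] {c : G.Walk u u} (hc : c.IsCycle)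
    (hx : x ∈ c.support) (hy : y ∉ c.support) (h : G.Adj x y) :
    ∃ (a b : V) (q : G.Walk a b), q.IsPath ∧ q.length = c.length := by
  have hc' := hc.rotate hx
  refine ⟨_, _, (c.rotate x hx).tail.concat h, hc'.isPath_tail.concat (fun hy' => hy ?_) h, ?_⟩
  · rw [support_tail_of_not_nil _ hc'.not_nil] at hy'
    exact (mem_support_rotate_iff c x hx).1 (List.mem_of_mem_tail hy')
  · rw [length_concat, length_tail_add_one hc'.not_nil, length_rotate]

lemma IsCycle.isHamiltonianCycle_of_forall_mem [DecidableEq V] {c : G.Walk u u}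
    (hc : c.IsCycle) (h : ∀ w, w ∈ c.support) : c.IsHamiltonianCycle := by
  refine ⟨hc, hc.isPath_tail.isHamiltonian_of_mem fun w => ?_⟩
  rw [support_tail_of_not_nil _ hc.not_nil]
  rcases List.mem_cons.1 ((cons_tail_support c).symm ▸ h w) with rfl | hw
  · exact end_mem_tail_support hc.not_nil
  · exact hw

end Walk

end SimpleGraph

/-- Dirac's theorem: if `G` is a simple graph with `n ≥ 3` vertices and minimum
degree `δ(G) ≥ n / 2`, then `G` is Hamiltonian. -/
theorem dirac_theorem {V : Type*} [Fintype V] [DecidableEq V]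
    (G : SimpleGraph V) [DecidableRel G.Adj]
    (hn : 3 ≤ Fintype.card V)
    (h : (Fintype.card V : ℚ) / 2 ≤ (G.minDegree : ℚ)) :
    G.IsHamiltonian := by
  have hδ : Fintype.card V ≤ 2 * G.minDegree := by
    exact_mod_cast (by linarith : (Fintype.card V : ℚ) ≤ 2 * G.minDegree)
  have : Nonempty V := Fintype.card_pos_iff.1 (by omega)
  have hconn := G.connected_of_card_le_two_mul_minDegree_add_one (by omega)
  obtain ⟨a, b, p, hp⟩ := G.exists_isLongestPath
  have ha := G.minDegree_le_degree a
  have hb := G.minDegree_le_degree b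
  have hlen : 2 ≤ p.length := by have := hp.degree_start_le_length; omega
  obtain ⟨d, hd, had, hbd⟩ := hp.exists_mem_darts_adj_adj (by have := hp.1.length_lt; omega)
  obtain ⟨c, hc, hclen⟩ := hp.1.exists_isCycle_length_eq_add_one hlen hd had hbd
  refine fun _ => ⟨a, c, hc.isHamiltonianCycle_of_forall_mem fun w => ?_⟩
  by_contra hw
  obtain ⟨e, -, he, he'⟩ :=
    (hconn a w).some.exists_boundary_dart {x | x ∈ c.support} c.start_mem_support hw
  obtain ⟨_, _, q, hq, hqlen⟩ := hc.exists_isPath_length_eq he he' e.adj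
  have := hp.2 q hq
  omega
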